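/- Let φ: K → M be a strong covering of finite abstract simplicial complexes. Then the induced map on the i-th incidence graphs, sending each i-face and (i+1)-face of K to its image under φ, is a covering map of graphs from B_i(K) to B_i(M). -/

import Mathlib

open Finset

variable {V : Type*} {W : Type*}

/-- An abstract simplicial complex: a collection of finite subsets of `V`
closed under taking subsets. -/
def IsComplex [DecidableEq V] (K : Finset (Finset V)) : Prop :=
  ∀ F ∈ K, ∀ G, G ⊆ F → G ∈ K

/-- The 1-skeleton graph of a complex. -/
def oneSkeleton [DecidableEq V] (K : Finset (Finset V)) : SimpleGraph V where
  Adj u v := u ≠ v ∧ ({u, v} : Finset V) ∈ K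
  symm := ⟨fun u v h => ⟨h.1.symm, by rw [Finset.pair_comm]; exact h.2⟩⟩
  loopless := ⟨fun u h => h.1 rfl⟩

/-- A strong covering of simplicial complexes `φ : K → M`:
`K` is a connected complex, `φ` is simplicial, the preimage of each face of `M`
is a disjoint union of faces of `K` each mapped bijectively onto it, and
incidences lift: whenever `G ∈ ∂ Gb` in `M` and `F ∈ φ⁻¹(G)`, there is
`Fb` of `K` with `F ∈ ∂ Fb` and `φ(Fb) = Gb`. -/
structure StrongCovering [DecidableEq V] [DecidableEq W]
    (K : Finset (Finset V)) (M : Finset (Finset W)) (φ : V → W) : Prop where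
  complexK : IsComplex K
  complexM : IsComplex M
  nonemptyK : K.Nonempty
  connectedK : ∀ u v : V, {u} ∈ K → {v} ∈ K → (oneSkeleton K).Reachable u v
  simplicial : ∀ F ∈ K, F.image φ ∈ M
  injOn : ∀ F ∈ K, Set.InjOn φ (F : Set V)
  disjointFibers : ∀ F ∈ K, ∀ F' ∈ K, F.image φ = F'.image φ → F ≠ F' → Disjoint F F'
  surjFaces : ∀ G ∈ M, ∃ F ∈ K, F.image φ = G
  strong : ∀ G ∈ M, ∀ Gb ∈ M, G ⊆ Gb → Gb.card = G.card + 1 →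
    ∀ F ∈ K, F.image φ = G → ∃ Fb ∈ K, F ⊆ Fb ∧ Fb.card = F.card + 1 ∧ Fb.image φ = Gb

/-- The `i`-th incidence graph `B_i(K)` of a complex: a bipartite graph on the
`i`-faces and `(i+1)`-faces of `K`, with `{F, Fb}` an edge iff `F ∈ ∂ Fb`. -/
def incGraph [DecidableEq V] (K : Finset (Finset V)) (i : ℕ) : SimpleGraph (Finset V) where
  Adj F G := F ∈ K ∧ G ∈ K ∧
    ((F ⊆ G ∧ F.card = i + 1 ∧ G.card = i + 2) ∨ (G ⊆ F ∧ G.card = i + 1 ∧ F.card = i + 2))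
  symm := by
    constructor
    intro F G h
    exact ⟨h.2.1, h.1, h.2.2.elim Or.inr Or.inl⟩
  loopless := by
    constructor
    intro F h
    rcases h.2.2 with ⟨-, h1, h2⟩ | ⟨-, h1, h2⟩ <;> omega

/-!
A strong covering maps every face of `K` bijectively onto a face of `M`, so it preserves
dimensions and inclusions and hence edges of the incidence graphs. At an `i`-face `F` the
neighbours are the `(i+1)`-faces above `F`: they are lifted by the strong covering
property, and two of them with the same image share `F` and so cannot be disjoint, hence
coincide by disjointness of fibres. At an `(i+1)`-face `F` the neighbours are the
`i`-faces of `F`: they are lifted as preimages inside `F` (faces are closed under subsets),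
and `φ` is injective on `F`, hence on its subsets.
-/

section incGraph

variable [DecidableEq V] {K : Finset (Finset V)} {i : ℕ} {F X : Finset V}

lemma incGraph_adj_iff_of_card_eq_add_one (hF : F.card = i + 1) :
    (incGraph K i).Adj F X ↔ F ∈ K ∧ X ∈ K ∧ F ⊆ X ∧ X.card = i + 2 := by
  simp only [incGraph]
  constructor
  · rintro ⟨hFK, hXK, ⟨hFX, -, hX⟩ | ⟨-, -, h⟩⟩
    · exact ⟨hFK, hXK, hFX, hX⟩
    · omega
  · rintro ⟨hFK, hXK, hFX, hX⟩
    exact ⟨hFK, hXK, Or.inl ⟨hFX, hF, hX⟩⟩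

lemma incGraph_adj_iff_of_card_eq_add_two (hF : F.card = i + 2) :
    (incGraph K i).Adj F X ↔ F ∈ K ∧ X ∈ K ∧ X ⊆ F ∧ X.card = i + 1 := by
  simp only [incGraph]
  constructor
  · rintro ⟨hFK, hXK, ⟨-, h, -⟩ | ⟨hXF, hX, -⟩⟩
    · omega
    · exact ⟨hFK, hXK, hXF, hX⟩
  · rintro ⟨hFK, hXK, hXF, hX⟩
    exact ⟨hFK, hXK, Or.inr ⟨hXF, hX, hF⟩⟩

end incGraph

namespace StrongCovering

variable [DecidableEq V] [DecidableEq W] {K : Finset (Finset V)} {M : Finset (Finset W)}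
  {φ : V → W} {i : ℕ} {F : Finset V}

lemma card_image (hc : StrongCovering K M φ) (hF : F ∈ K) : (F.image φ).card = F.card :=
  card_image_of_injOn (hc.injOn F hF)

lemma incGraph_adj_image (hc : StrongCovering K M φ) {F G : Finset V}
    (h : (incGraph K i).Adj F G) : (incGraph M i).Adj (F.image φ) (G.image φ) := by
  obtain ⟨hF, hG, hFG⟩ := h
  refine ⟨hc.simplicial F hF, hc.simplicial G hG, ?_⟩
  rw [hc.card_image hF, hc.card_image hG]
  exact hFG.imp (And.imp_left (image_subset_image ·)) (And.imp_left (image_subset_image ·))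

lemma injOn_image_neighborSet_of_card_eq_add_one (hc : StrongCovering K M φ)
    (hF : F.card = i + 1) :
    Set.InjOn (fun X => X.image φ) ((incGraph K i).neighborSet F) := by
  intro X hX Y hY hXY
  obtain ⟨-, hXK, hFX, -⟩ := (incGraph_adj_iff_of_card_eq_add_one hF).1 hX
  obtain ⟨-, hYK, hFY, -⟩ := (incGraph_adj_iff_of_card_eq_add_one hF).1 hY
  by_contra hne
  obtain ⟨v, hv⟩ : F.Nonempty := card_pos.1 (by omega)
  exact disjoint_left.1 (hc.disjointFibers X hXK Y hYK hXY hne) (hFX hv) (hFY hv)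

lemma surjOn_image_neighborSet_of_card_eq_add_one (hc : StrongCovering K M φ)
    (hFK : F ∈ K) (hF : F.card = i + 1) :
    Set.SurjOn (fun X => X.image φ) ((incGraph K i).neighborSet F)
      ((incGraph M i).neighborSet (F.image φ)) := by
  intro G hG
  have hFim : (F.image φ).card = i + 1 := by rw [hc.card_image hFK, hF]
  obtain ⟨hFM, hGM, hFG, hGcard⟩ := (incGraph_adj_iff_of_card_eq_add_one hFim).1 hG
  obtain ⟨X, hXK, hFX, hXcard, rfl⟩ :=
    hc.strong _ hFM G hGM hFG (by omega) F hFK rfl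
  exact ⟨X, (incGraph_adj_iff_of_card_eq_add_one hF).2 ⟨hFK, hXK, hFX, by omega⟩, rfl⟩

lemma injOn_image_neighborSet_of_card_eq_add_two (hc : StrongCovering K M φ)
    (hFK : F ∈ K) (hF : F.card = i + 2) :
    Set.InjOn (fun X => X.image φ) ((incGraph K i).neighborSet F) := by
  refine (image_injOn_powerset_of_injOn (hc.injOn F hFK)).mono fun X hX => ?_
  exact mem_powerset.2 ((incGraph_adj_iff_of_card_eq_add_two hF).1 hX).2.2.1

lemma surjOn_image_neighborSet_of_card_eq_add_two (hc : StrongCovering K M φ)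
    (hFK : F ∈ K) (hF : F.card = i + 2) :
    Set.SurjOn (fun X => X.image φ) ((incGraph K i).neighborSet F)
      ((incGraph M i).neighborSet (F.image φ)) := by
  intro G hG
  have hFim : (F.image φ).card = i + 2 := by rw [hc.card_image hFK, hF]
  obtain ⟨-, -, hGF, hGcard⟩ := (incGraph_adj_iff_of_card_eq_add_two hFim).1 hG
  obtain ⟨X, hXF, rfl⟩ := subset_image_iff.1 hGF
  have hXK : X ∈ K := hc.complexK F hFK X hXF
  refine ⟨X, (incGraph_adj_iff_of_card_eq_add_two hF).2 ⟨hFK, hXK, hXF, ?_⟩, rfl⟩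
  rwa [← hc.card_image hXK]

lemma bijOn_image_neighborSet (hc : StrongCovering K M φ) (hFK : F ∈ K)
    (hF : F.card = i + 1 ∨ F.card = i + 2) :
    Set.BijOn (fun X => X.image φ) ((incGraph K i).neighborSet F)
      ((incGraph M i).neighborSet (F.image φ)) := by
  refine ⟨fun _ hX => hc.incGraph_adj_image hX, ?_⟩
  rcases hF with hF | hF
  · exact ⟨hc.injOn_image_neighborSet_of_card_eq_add_one hF,
      hc.surjOn_image_neighborSet_of_card_eq_add_one hFK hF⟩
  · exact ⟨hc.injOn_image_neighborSet_of_card_eq_add_two hFK hF,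
      hc.surjOn_image_neighborSet_of_card_eq_add_two hFK hF⟩

end StrongCovering

/-- a strong covering `φ : K → M` induces a covering map of graphs
from the `i`-th incidence graph `B_i(K)` to `B_i(M)`: the induced map
`F ↦ φ(F)` is a graph homomorphism, it is surjective onto the vertices of
`B_i(M)` (the `i`- and `(i+1)`-faces of `M`), and it restricts to a bijection
from the neighborhood of each vertex of `B_i(K)` onto the neighborhood of its
image. -/
theorem strongCovering_incGraph_covering [DecidableEq V] [DecidableEq W]
    (K : Finset (Finset V)) (M : Finset (Finset W)) (φ : V → W)
    (hc : StrongCovering K M φ) (i : ℕ) :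
    (∀ F G : Finset V, (incGraph K i).Adj F G →
        (incGraph M i).Adj (F.image φ) (G.image φ)) ∧
    (∀ G ∈ M, G.card = i + 1 ∨ G.card = i + 2 →
        ∃ F ∈ K, F.image φ = G) ∧
    (∀ F ∈ K, F.card = i + 1 ∨ F.card = i + 2 →
        Set.BijOn (fun X => X.image φ)
          ((incGraph K i).neighborSet F)
          ((incGraph M i).neighborSet (F.image φ))) :=
  ⟨fun _ _ => hc.incGraph_adj_image, fun G hG _ => hc.surjFaces G hG,
    fun _ hF => hc.bijOn_image_neighborSet hF⟩
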